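/- Assume conditions (a) and (1.2) hold and W satisfies condition (w) and contains P⁰(Γ). If w is an extreme point of S(Γ,W), then the support of w contains no finite nonempty subset G̃ with the following two properties: (1) the intersection of G̃ with each Ω_k is either empty or consists of exactly two distinct vertices; (2) G̃ (with the induced edges of G) contains no odd primitive cycles. -/

import Mathlib

open Filter

namespace Birkhoff

variable {Ω ι : Type*}

/-- Adjacency in the associated graph `G`: two distinct vertices are adjacent
iff they lie in a common set `Ω_k`. -/
def Adj (Γ : ι → Set Ω) (g g' : Ω) : Prop :=
  g ≠ g' ∧ ∃ k, g ∈ Γ k ∧ g' ∈ Γ k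

/-- `Γ(g)`, the set of indices `k` with `g ∈ Ω_k`. -/
def idx (Γ : ι → Set Ω) (g : Ω) : Set ι :=
  {k | g ∈ Γ k}

/-- Condition (a): every point lies in only finitely many of the sets. -/
def CondA (Γ : ι → Set Ω) : Prop :=
  ∀ g : Ω, (idx Γ g).Finite

/-- Condition (1.2): `Ω_k \ Ω_j ≠ ∅` for all `j ≠ k`. -/
def Cond12 (Γ : ι → Set Ω) : Prop :=
  ∀ j k : ι, j ≠ k → (Γ k \ Γ j).Nonempty

/-- The set `S(Γ)` of nonnegative functions whose sum over each `Ω_k` is `1`. -/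
def SGamma (Γ : ι → Set Ω) : Set (Ω → ℝ) :=
  {w | (∀ g : Ω, 0 ≤ w g) ∧ ∀ k : ι, HasSum (fun g : Γ k => w g) 1}

/-- The set `S⁰(Γ)` of nonnegative functions whose sum over each `Ω_k` is `≤ 1`. -/
def S0Gamma (Γ : ι → Set Ω) : Set (Ω → ℝ) :=
  {w | (∀ g : Ω, 0 ≤ w g) ∧ ∀ k : ι, ∃ s : ℝ, s ≤ 1 ∧ HasSum (fun g : Γ k => w g) s}

/-- The set `P(Γ)` of `{0,1}`-valued functions in `S(Γ)`. -/
def PGamma (Γ : ι → Set Ω) : Set (Ω → ℝ) :=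
  {w | w ∈ SGamma Γ ∧ ∀ g : Ω, w g = 0 ∨ w g = 1}

/-- The set `P⁰(Γ)` of `{0,1}`-valued functions whose sum over each `Ω_k` is `≤ 1`. -/
def P0Gamma (Γ : ι → Set Ω) : Set (Ω → ℝ) :=
  {w | (∀ g : Ω, w g = 0 ∨ w g = 1) ∧
    ∀ k : ι, ∃ s : ℝ, s ≤ 1 ∧ HasSum (fun g : Γ k => w g) s}

/-- Condition (w): `W` is solid. -/
def CondW (W : Set (Ω → ℝ)) : Prop :=
  ∀ w ∈ W, ∀ w' : Ω → ℝ, (∀ g : Ω, |w' g| ≤ |w g|) → w' ∈ W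

/-- The list of edges of a path, as unordered pairs. -/
def edgeList (l : List Ω) : List (Sym2 Ω) :=
  (l.zip l.tail).map fun p => s(p.1, p.2)

/-- A path in the associated graph: nonempty list of vertices, consecutive
vertices adjacent, and all edges distinct. -/
def IsPathList (Γ : ι → Set Ω) (l : List Ω) : Prop :=
  l ≠ [] ∧ l.Chain' (Adj Γ) ∧ (edgeList l).Nodup

/-- Each vertex of `l` is adjacent to at most two other vertices of `l`. -/
def SimpleOn (Γ : ι → Set Ω) (l : List Ω) : Prop :=
  ∀ g ∈ l, ({g' : Ω | g' ∈ l ∧ Adj Γ g g'}).ncard ≤ 2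

/-- No set `Ω_k` contains more than two vertices of `l`. -/
def PrimitiveOn (Γ : ι → Set Ω) (l : List Ω) : Prop :=
  ∀ k : ι, ({g : Ω | g ∈ l ∧ g ∈ Γ k}).ncard ≤ 2

def IsSimplePath (Γ : ι → Set Ω) (l : List Ω) : Prop :=
  IsPathList Γ l ∧ SimpleOn Γ l

def IsPrimitivePath (Γ : ι → Set Ω) (l : List Ω) : Prop :=
  IsSimplePath Γ l ∧ PrimitiveOn Γ l

/-- A (simple) cycle `(g₁, …, g_m, g₁)`, encoded as the list of its `m + 1`
consecutive vertices (first vertex repeated at the end). -/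
def IsCycle (Γ : ι → Set Ω) (l : List Ω) : Prop :=
  IsPathList Γ l ∧ l.head? = l.getLast? ∧ 2 ≤ l.length ∧ l.dropLast.Nodup

def IsSimpleCycle (Γ : ι → Set Ω) (l : List Ω) : Prop :=
  IsCycle Γ l ∧ SimpleOn Γ l

def IsPrimitiveCycle (Γ : ι → Set Ω) (l : List Ω) : Prop :=
  IsSimpleCycle Γ l ∧ PrimitiveOn Γ l

/-- The cycle `(g₁, …, g_m, g₁)`, a list with `m + 1` entries, is odd iff `m` is odd. -/
def OddCycleList (l : List Ω) : Prop :=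
  Odd (l.length - 1)

/-- `g'` can be reached from `g` by a path all of whose vertices lie in `A`. -/
def ReachIn (Γ : ι → Set Ω) (A : Set Ω) (g g' : Ω) : Prop :=
  ∃ l : List Ω, l.Chain' (Adj Γ) ∧ (∀ x ∈ l, x ∈ A) ∧
    l.head? = some g ∧ l.getLast? = some g'

/-- The connected component of `g` in the subgraph of `G` induced on `A`. -/
def component (Γ : ι → Set Ω) (A : Set Ω) (g : Ω) : Set Ω :=
  {g' | ReachIn Γ A g g'}

/-- The subgraph induced on `A` is connected. -/
def ConnectedOn (Γ : ι → Set Ω) (A : Set Ω) : Prop :=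
  ∀ g ∈ A, ∀ g' ∈ A, ReachIn Γ A g g'

/-- `G_n := ⋃_{k ≤ n} Ω_k`. -/
def Gn (Γ : ℕ → Set Ω) (n : ℕ) : Set Ω :=
  ⋃ k ∈ {k : ℕ | k ≤ n}, Γ k

/-- The space `W'` of functions pairing summably with every element of `W`. -/
def Wdual (W : Set (Ω → ℝ)) : Set (Ω → ℝ) :=
  {w' | ∀ w ∈ W, Summable fun g : Ω => |w g * w' g|}

/-- `S_n⁰(Γ, W)`: (extensions by zero of) nonnegative functions on `G_n` whose
sums over `Ω_k`, `k ≤ n`, equal `1`, whose sums over `Ω_k ∩ G_n`, `k > n`, are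
`≤ 1`, and which belong to `W`. -/
def Sn0 (Γ : ℕ → Set Ω) (W : Set (Ω → ℝ)) (n : ℕ) : Set (Ω → ℝ) :=
  {w | (∀ g : Ω, 0 ≤ w g) ∧ (∀ g ∉ Gn Γ n, w g = 0) ∧
    (∀ k ≤ n, HasSum (fun g : Γ k => w g) 1) ∧
    (∀ k > n, ∃ s : ℝ, s ≤ 1 ∧ HasSum (fun g : Γ k => w g) s) ∧ w ∈ W}


section Aux

open SimpleGraph

lemma Adj.symm' {Γ : ι → Set Ω} {u v : Ω} (h : Birkhoff.Adj Γ u v) : Birkhoff.Adj Γ v u :=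
  ⟨h.1.symm, h.2.imp fun _ hk => ⟨hk.2, hk.1⟩⟩

/-- The graph induced on `Gt`. -/
def indG (Γ : ι → Set Ω) (Gt : Set Ω) : SimpleGraph Ω where
  Adj u v := u ∈ Gt ∧ v ∈ Gt ∧ Birkhoff.Adj Γ u v
  symm := ⟨fun _ _ h => ⟨h.2.1, h.1, h.2.2.symm'⟩⟩
  loopless := ⟨fun _ h => h.2.2.1 rfl⟩

lemma edgeList_nil : edgeList ([] : List Ω) = [] := rfl

lemma edgeList_single (a : Ω) : edgeList [a] = [] := rfl

lemma edgeList_cons₂ (a b : Ω) (t : List Ω) :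
    edgeList (a :: b :: t) = s(a, b) :: edgeList (b :: t) := rfl

lemma mem_of_mem_edgeList {l : List Ω} {e : Sym2 Ω} (he : e ∈ edgeList l) {x : Ω}
    (hx : x ∈ e) : x ∈ l := by
  induction l with
  | nil => simp [edgeList_nil] at he
  | cons a t ih =>
    cases t with
    | nil => simp [edgeList_single] at he
    | cons b t2 =>
      rw [edgeList_cons₂] at he
      rcases List.mem_cons.mp he with rfl | he'
      · rcases Sym2.mem_iff.mp hx with rfl | rfl
        · exact List.mem_cons_self
        · exact List.mem_cons_of_mem _ List.mem_cons_self
      · exact List.mem_cons_of_mem _ (ih he')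

lemma edgeList_nodup_of_nodup {l : List Ω} (h : l.Nodup) : (edgeList l).Nodup := by
  induction l with
  | nil => simp [edgeList_nil]
  | cons a t ih =>
    cases t with
    | nil => simp [edgeList_single]
    | cons b t2 =>
      rw [edgeList_cons₂]
      refine List.nodup_cons.mpr ⟨fun hmem => ?_, ih (List.nodup_cons.mp h).2⟩
      exact (List.nodup_cons.mp h).1 (mem_of_mem_edgeList hmem (Sym2.mem_mk_left a b))

lemma edgeList_concat : ∀ (l : List Ω) (hl : l ≠ []) (v : Ω),
    edgeList (l ++ [v]) = edgeList l ++ [s(l.getLast hl, v)]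
  | [], hl, v => absurd rfl hl
  | [a], _, v => rfl
  | a :: b :: t, _, v => by
    have := edgeList_concat (b :: t) (List.cons_ne_nil _ _) v
    simp only [List.cons_append, edgeList_cons₂] at this ⊢
    rw [this, List.getLast_cons (List.cons_ne_nil _ _)]

/-- Key list lemma: the edge list of a closed path `v :: t` (with `t` nodup ending at `v`)
has no duplicates. -/
lemma edgeList_closed_nodup {v : Ω} {t : List Ω} (ht : t.Nodup)
    (hlast : t.getLast? = some v) (hlen : 3 ≤ t.length) :
    (edgeList (v :: t)).Nodup := by
  have htne : t ≠ [] := by rintro rfl; simp at hlen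
  obtain ⟨u, hspec⟩ : ∃ u, u ++ [v] = t :=
    ⟨t.dropLast, List.dropLast_append_getLast? v hlast⟩
  have hune : u ≠ [] := by
    rintro h0; rw [h0] at hspec; rw [← hspec] at hlen; simp at hlen
  have hvu : v ∉ u := by
    have := hspec ▸ ht
    exact fun hv => (List.disjoint_of_nodup_append this) hv (List.mem_singleton_self v)
  have hunodup : u.Nodup := (List.nodup_append.mp (hspec ▸ ht)).1
  have hcons : v :: t = (v :: u) ++ [v] := by rw [← hspec]; rfl
  rw [hcons, edgeList_concat (v :: u) (List.cons_ne_nil _ _) v]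
  have hgl : (v :: u).getLast (List.cons_ne_nil _ _) = u.getLast hune :=
    List.getLast_cons hune
  apply List.Nodup.append
  · exact edgeList_nodup_of_nodup (List.nodup_cons.mpr ⟨hvu, hunodup⟩)
  · exact List.nodup_singleton _
  · intro e he hei
    rw [List.mem_singleton] at hei
    subst hei
    -- e = s(getLast u, v) ∈ edgeList (v :: u)
    obtain ⟨b, u2, rfl⟩ : ∃ b u2, u = b :: u2 := by
      cases u with
      | nil => exact absurd rfl hune
      | cons b u2 => exact ⟨b, u2, rfl⟩
    rw [edgeList_cons₂] at he
    rcases List.mem_cons.mp he with heq | he'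
    · -- s(getLast, v) = s(v, b) ⟹ getLast = b ⟹ length-1 list
      have h1 : (b :: u2).getLast hune = b ∧ v = v ∨ (b :: u2).getLast hune = v ∧ v = b := by
        have := Sym2.eq_iff.mp heq
        tauto
      rcases h1 with ⟨hgb, _⟩ | ⟨hgv, _⟩
      · -- getLast (b::u2) = b forces u2 = []
        cases u2 with
        | nil =>
          -- then t = [b, v], length 2 < 3
          rw [← hspec] at hlen; simp at hlen
        | cons c u3 =>
          have hmem : (b :: c :: u3).getLast hune ∈ c :: u3 := by
            rw [List.getLast_cons (List.cons_ne_nil _ _)]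
            exact List.getLast_mem _
          rw [hgb] at hmem
          exact (List.nodup_cons.mp hunodup).1 hmem
      · exact hvu (hgv ▸ List.getLast_mem hune)
    · exact hvu (mem_of_mem_edgeList he' (Sym2.mem_mk_right _ v))

end Aux

section WalkAux

open SimpleGraph

lemma length_rotate' {V : Type*} [DecidableEq V] {H : SimpleGraph V} {u v : V} (c : H.Walk v v)
    (h : u ∈ c.support) : (c.rotate u h).length = c.length := by
  have h1 := congrArg Walk.length (c.take_spec h)
  rw [Walk.length_append] at h1
  show ((c.dropUntil u h).append (c.takeUntil u h)).length = c.length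
  rw [Walk.length_append]
  omega

lemma walk_mem_Gt {Γ : ι → Set Ω} {Gt : Set Ω} :
    ∀ {a b : Ω} (p : (indG Γ Gt).Walk a b), 1 ≤ p.length → ∀ x ∈ p.support, x ∈ Gt := by
  intro a b p
  induction p with
  | nil => intro h; simp at h
  | cons h q ih =>
    intro _ x hx
    rw [Walk.support_cons] at hx
    rcases List.mem_cons.mp hx with rfl | hx'
    · exact h.1
    · rcases Nat.eq_zero_or_pos q.length with h0 | h1
      · have htail : q.support.tail = [] := by
          apply List.length_eq_zero_iff.mp
          rw [List.length_tail, Walk.length_support]; omega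
        rw [q.support_eq_cons, htail] at hx'
        rw [List.mem_singleton.mp hx']
        exact h.2.1
      · exact ih h1 x hx'

lemma getLast?_cons_of_ne_nil' {α : Type*} (a : α) {t : List α} (ht : t ≠ []) :
    (a :: t).getLast? = t.getLast? := by
  cases t with
  | nil => exact absurd rfl ht
  | cons b t' => exact List.getLast?_cons_cons

lemma closed_getLast? {V : Type*} {H : SimpleGraph V} {u : V} (c : H.Walk u u) :
    c.support.getLast? = some u := by
  rw [List.getLast?_eq_getLast_of_ne_nil (Walk.support_ne_nil c)]
  exact congrArg some c.getLast_support

lemma closed_tail_ne_nil {V : Type*} {H : SimpleGraph V} {u : V} (c : H.Walk u u)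
    (hc : 1 ≤ c.length) : c.support.tail ≠ [] := by
  intro h0
  have h2 := c.length_support
  have h3 : c.support.tail.length = 0 := by rw [h0]; rfl
  rw [List.length_tail] at h3
  omega

lemma closed_tail_getLast? {V : Type*} {H : SimpleGraph V} {u : V} (c : H.Walk u u)
    (hc : 1 ≤ c.length) : c.support.tail.getLast? = some u := by
  have h1 := closed_getLast? c
  rw [c.support_eq_cons, getLast?_cons_of_ne_nil' u (closed_tail_ne_nil c hc)] at h1
  exact h1

lemma mem_closed_support_iff_tail {V : Type*} {H : SimpleGraph V} {u x : V}
    (c : H.Walk u u) (hc : 1 ≤ c.length) : x ∈ c.support ↔ x ∈ c.support.tail := by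
  constructor
  · intro hx
    rw [c.support_eq_cons] at hx
    rcases List.mem_cons.mp hx with rfl | h2
    · exact List.mem_of_mem_getLast? (closed_tail_getLast? c hc)
    · exact h2
  · intro hx; rw [c.support_eq_cons]; exact List.mem_cons_of_mem _ hx

lemma count_start_le_one_of_min {V : Type*} [DecidableEq V] {H : SimpleGraph V} {m : ℕ}
    (hmodd : Odd m) (hmin : ∀ (u : V) (c : H.Walk u u), Odd c.length → m ≤ c.length)
    {u : V} (c : H.Walk u u) (hc : c.length = m) :
    c.support.tail.count u ≤ 1 := by
  classical
  by_contra hcnt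
  push_neg at hcnt
  have hm2 : m % 2 = 1 := Nat.odd_iff.mp hmodd
  cases c with
  | nil =>
    simp only [Walk.length_nil] at hc; omega
  | cons h q =>
    rw [Walk.support_cons, List.tail_cons] at hcnt
    have hmem : u ∈ q.support := by
      by_contra hmem
      rw [List.count_eq_zero_of_not_mem hmem] at hcnt; omega
    have hcount1 := q.count_support_takeUntil_eq_one hmem
    have hsupp : q.support = (q.takeUntil u hmem).support ++ (q.dropUntil u hmem).support.tail := by
      rw [← Walk.support_append, q.take_spec hmem]
    rw [hsupp, List.count_append, hcount1] at hcnt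
    have hdrmem : u ∈ (q.dropUntil u hmem).support.tail := by
      by_contra hmem2
      rw [List.count_eq_zero_of_not_mem hmem2] at hcnt; omega
    have hdrlen : 1 ≤ (q.dropUntil u hmem).length := by
      by_contra h0
      have h1 : (q.dropUntil u hmem).support.tail.length = 0 := by
        rw [List.length_tail, Walk.length_support]; omega
      rw [List.length_eq_zero_iff.mp h1] at hdrmem
      simp at hdrmem
    have hab : (q.takeUntil u hmem).length + (q.dropUntil u hmem).length = q.length := by
      have h1 := congrArg Walk.length (q.take_spec hmem)
      rwa [Walk.length_append] at h1
    have hql : q.length + 1 = m := by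
      rw [← hc, Walk.length_cons]
    by_cases hb : (q.dropUntil u hmem).length % 2 = 1
    · have := hmin u (q.dropUntil u hmem) (Nat.odd_iff.mpr hb)
      omega
    · have hodd2 : (Walk.cons h (q.takeUntil u hmem)).length % 2 = 1 := by
        rw [Walk.length_cons]; omega
      have := hmin u (Walk.cons h (q.takeUntil u hmem)) (Nat.odd_iff.mpr hodd2)
      rw [Walk.length_cons] at this
      omega

lemma support_tail_nodup_of_min {V : Type*} [DecidableEq V] {H : SimpleGraph V} {m : ℕ}
    (hmodd : Odd m) (hmin : ∀ (u : V) (c : H.Walk u u), Odd c.length → m ≤ c.length)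
    {v : V} (c : H.Walk v v) (hc : c.length = m) : c.support.tail.Nodup := by
  classical
  rw [List.nodup_iff_count_le_one]
  intro w
  by_contra hcnt
  push_neg at hcnt
  have hwtail : w ∈ c.support.tail := by
    by_contra hmem
    rw [List.count_eq_zero_of_not_mem hmem] at hcnt; omega
  have hwsup : w ∈ c.support := by
    rw [c.support_eq_cons]; exact List.mem_cons_of_mem _ hwtail
  have hperm : ((c.rotate w hwsup).support.tail).count w = (c.support.tail).count w :=
    (c.support_rotate _ hwsup).perm.count_eq w
  have := count_start_le_one_of_min hmodd hmin (c.rotate w hwsup)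
    (by rw [length_rotate']; exact hc)
  omega

lemma neighbors_le_two_of_min {V : Type*} [DecidableEq V] {H : SimpleGraph V} {m : ℕ}
    (hmodd : Odd m) (hmin : ∀ (u : V) (c : H.Walk u u), Odd c.length → m ≤ c.length)
    {g : V} (c : H.Walk g g) (hc : c.length = m) (hm3 : 3 ≤ m) :
    {x | x ∈ c.support ∧ H.Adj g x}.ncard ≤ 2 := by
  classical
  have hm2 : m % 2 = 1 := Nat.odd_iff.mp hmodd
  cases c with
  | nil => simp only [Walk.length_nil] at hc; omega
  | cons h q =>
    have hql : q.length + 1 = m := by rw [← hc, Walk.length_cons]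
    have hmemq : ∀ x, x ∈ (Walk.cons h q).support → H.Adj g x → x ∈ q.support := by
      intro x hxs hadj
      rw [Walk.support_cons] at hxs
      rcases List.mem_cons.mp hxs with rfl | h2
      · exact absurd rfl hadj.ne
      · exact h2
    set F : V → ℕ := fun x => if hx : x ∈ q.support then (q.takeUntil x hx).length else 0 with hF
    have hFval : ∀ x (hx : x ∈ q.support), F x = (q.takeUntil x hx).length := fun x hx => dif_pos hx
    have hpre : ∀ x (hx : x ∈ q.support), (q.takeUntil x hx).support <+: q.support := by
      intro x hx
      exact ⟨(q.dropUntil x hx).support.tail, by rw [← Walk.support_append, q.take_spec hx]⟩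
    have hinj : Set.InjOn F {x | x ∈ (Walk.cons h q).support ∧ H.Adj g x} := by
      intro x hx y hy hxy
      have hxq := hmemq x hx.1 hx.2
      have hyq := hmemq y hy.1 hy.2
      rw [hFval x hxq, hFval y hyq] at hxy
      have h1 := List.prefix_iff_eq_take.mp (hpre x hxq)
      have h2 := List.prefix_iff_eq_take.mp (hpre y hyq)
      have hlen : (q.takeUntil x hxq).support.length = (q.takeUntil y hyq).support.length := by
        rw [Walk.length_support, Walk.length_support, hxy]
      have heq : (q.takeUntil x hxq).support = (q.takeUntil y hyq).support := by
        rw [h1, h2, hlen]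
      have hx' : (q.takeUntil x hxq).support.getLast? = some x := by
        rw [List.getLast?_eq_getLast_of_ne_nil (Walk.support_ne_nil _), Walk.getLast_support]
      have hy' : (q.takeUntil y hyq).support.getLast? = some y := by
        rw [List.getLast?_eq_getLast_of_ne_nil (Walk.support_ne_nil _), Walk.getLast_support]
      rw [heq, hy'] at hx'
      exact (Option.some_injective _ hx').symm
    have hmaps : ∀ x ∈ {x | x ∈ (Walk.cons h q).support ∧ H.Adj g x},
        F x ∈ ({0, m - 2} : Set ℕ) := by
      intro x hx
      have hxq := hmemq x hx.1 hx.2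
      have hadj : H.Adj g x := hx.2
      have hab : (q.takeUntil x hxq).length + (q.dropUntil x hxq).length = q.length := by
        have h1 := congrArg Walk.length (q.take_spec hxq)
        rwa [Walk.length_append] at h1
      have hbpos : 1 ≤ (q.dropUntil x hxq).length := by
        rcases Nat.eq_zero_or_pos (q.dropUntil x hxq).length with h0 | h1
        · exact absurd (Walk.eq_of_length_eq_zero h0) hadj.ne'
        · exact h1
      rw [hFval x hxq]
      simp only [Set.mem_insert_iff, Set.mem_singleton_iff]
      by_cases hpar : ((q.takeUntil x hxq).length + 2) % 2 = 1
      · have hW1 : ((Walk.cons h (q.takeUntil x hxq)).concat hadj.symm).length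
            = (q.takeUntil x hxq).length + 2 := by
          rw [Walk.length_concat, Walk.length_cons]
        have := hmin g ((Walk.cons h (q.takeUntil x hxq)).concat hadj.symm)
          (by rw [hW1]; exact Nat.odd_iff.mpr hpar)
        rw [hW1] at this
        omega
      · have hW2 : (Walk.cons hadj (q.dropUntil x hxq)).length
            = (q.dropUntil x hxq).length + 1 := by
          rw [Walk.length_cons]
        have hodd2 : (Walk.cons hadj (q.dropUntil x hxq)).length % 2 = 1 := by
          rw [hW2]; omega
        have := hmin g (Walk.cons hadj (q.dropUntil x hxq)) (Nat.odd_iff.mpr hodd2)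
        rw [hW2] at this
        omega
    calc {x | x ∈ (Walk.cons h q).support ∧ H.Adj g x}.ncard
        ≤ ({0, m - 2} : Set ℕ).ncard :=
          Set.ncard_le_ncard_of_injOn F hmaps hinj (Set.toFinite _)
      _ ≤ 2 := by
          refine le_trans (Set.ncard_insert_le _ _) ?_
          rw [Set.ncard_singleton]

lemma exists_bool_coloring {V : Type*} (H : SimpleGraph V)
    (hpar : ∀ (v : V) (c : H.Walk v v), Even c.length) :
    ∃ c : V → Bool, ∀ u v, H.Adj u v → c u ≠ c v := by
  classical
  have parity : ∀ (r u : V) (p q : H.Walk r u), (Even p.length ↔ Even q.length) := by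
    intro r u p q
    have h1 := hpar r (p.append q.reverse)
    rw [Walk.length_append, Walk.length_reverse] at h1
    rw [Nat.even_add] at h1
    tauto
  refine ⟨fun v => decide (∃ p : H.Walk (H.connectedComponentMk v).out v, Even p.length), ?_⟩
  intro u v huv hcc
  rw [decide_eq_decide] at hcc
  have hout : (H.connectedComponentMk u).out = (H.connectedComponentMk v).out := by
    rw [ConnectedComponent.connectedComponentMk_eq_of_adj huv]
  obtain ⟨p⟩ : H.Reachable (H.connectedComponentMk u).out u :=
    SimpleGraph.ConnectedComponent.exact (H.connectedComponentMk u).out_eq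
  have h1 : (∃ q : H.Walk (H.connectedComponentMk u).out u, Even q.length) ↔ Even p.length :=
    ⟨fun ⟨q, hq⟩ => (parity _ _ q p).mp hq, fun hp => ⟨p, hp⟩⟩
  have h2 : (∃ q : H.Walk (H.connectedComponentMk v).out v, Even q.length)
      ↔ Even (p.concat huv).length := by
    rw [← hout]
    exact ⟨fun ⟨q, hq⟩ => (parity _ _ q (p.concat huv)).mp hq, fun hp => ⟨p.concat huv, hp⟩⟩
  rw [h1, h2, Walk.length_concat, Nat.even_add_one] at hcc
  tauto

lemma odd_closed_walk_gives_cycle {Γ : ι → Set Ω} {Gt : Set Ω} (hfin : Gt.Finite)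
    (hk2 : ∀ k, (Gt ∩ Γ k).ncard ≤ 2)
    {v0 : Ω} (p0 : (indG Γ Gt).Walk v0 v0) (hodd0 : Odd p0.length) :
    ∃ l : List Ω, IsPrimitiveCycle Γ l ∧ OddCycleList l ∧ ∀ x ∈ l, x ∈ Gt := by
  classical
  obtain ⟨v, p, hp, hmodd⟩ : sInf {n | ∃ v, ∃ p : (indG Γ Gt).Walk v v, p.length = n ∧ Odd n}
      ∈ {n | ∃ v, ∃ p : (indG Γ Gt).Walk v v, p.length = n ∧ Odd n} :=
    Nat.sInf_mem ⟨p0.length, v0, p0, rfl, hodd0⟩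
  set m := sInf {n | ∃ v, ∃ p : (indG Γ Gt).Walk v v, p.length = n ∧ Odd n} with hm
  have hmin : ∀ (u : Ω) (c : (indG Γ Gt).Walk u u), Odd c.length → m ≤ c.length := by
    intro u c hcodd
    exact Nat.sInf_le ⟨u, c, rfl, hcodd⟩
  have hm1 : 1 ≤ m := by
    rcases Nat.eq_zero_or_pos m with h0 | h1
    · rw [h0] at hmodd; simp [Nat.odd_iff] at hmodd
    · exact h1
  have hmne1 : m ≠ 1 := by
    intro h1
    cases p with
    | nil => rw [h1] at hp; simp at hp
    | cons hadj q =>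
      have h0 : q.length = 0 := by
        rw [h1] at hp
        simp only [Walk.length_cons] at hp
        omega
      have hq := Walk.eq_of_length_eq_zero h0
      exact (indG Γ Gt).loopless.irrefl v (hq ▸ hadj)
  have hm3 : 3 ≤ m := by
    rcases hmodd with ⟨t, ht⟩; omega
  have hGt : ∀ x ∈ p.support, x ∈ Gt := fun x hx => walk_mem_Gt p (by omega) x hx
  have hnodup : p.support.tail.Nodup := support_tail_nodup_of_min hmodd hmin p hp
  have hsupp : p.support = v :: p.support.tail := p.support_eq_cons
  have htlen : p.support.tail.length = m := by
    have h1 := p.length_support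
    have h2 : p.support.tail.length = p.support.length - 1 := List.length_tail
    omega
  have htne : p.support.tail ≠ [] := by
    intro h0; rw [h0] at htlen; simp at htlen; omega
  have htlast : p.support.tail.getLast? = some v := closed_tail_getLast? p (by omega)
  refine ⟨p.support, ⟨⟨⟨⟨Walk.support_ne_nil p, ?_, ?_⟩, ?_, ?_, ?_⟩, ?_⟩, ?_⟩, ?_, ?_⟩
  · -- Chain' (Adj Γ)
    exact List.IsChain.imp (fun a b hab => hab.2.2) p.isChain_adj_support
  · -- edgeList nodup
    rw [hsupp]
    exact edgeList_closed_nodup hnodup htlast (by omega)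
  · -- head? = getLast?
    rw [hsupp, List.head?_cons, getLast?_cons_of_ne_nil' v htne, htlast]
  · -- 2 ≤ length
    rw [Walk.length_support]; omega
  · -- dropLast nodup
    rw [hsupp]
    obtain ⟨b, t', ht'⟩ : ∃ b t', p.support.tail = b :: t' := by
      cases hcase : p.support.tail with
      | nil => exact absurd hcase htne
      | cons b t' => exact ⟨b, t', rfl⟩
    rw [ht', List.dropLast_cons₂]
    have hdecomp : (b :: t').dropLast ++ [v] = b :: t' := by
      rw [← ht']; exact List.dropLast_append_getLast? v htlast
    have hnd : ((b :: t').dropLast ++ [v]).Nodup := by rw [hdecomp, ← ht']; exact hnodup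
    have hvnot : v ∉ (b :: t').dropLast :=
      fun hv => (List.disjoint_of_nodup_append hnd) hv (List.mem_singleton_self v)
    exact List.nodup_cons.mpr ⟨hvnot, (List.nodup_append.mp hnd).1⟩
  · -- SimpleOn
    intro g hg
    have hlen' : (p.rotate g hg).length = m := by rw [length_rotate']; exact hp
    have hmemiff : ∀ x, (x ∈ p.support ↔ x ∈ (p.rotate g hg).support) := by
      intro x
      rw [mem_closed_support_iff_tail p (by omega),
        mem_closed_support_iff_tail (p.rotate g hg) (by omega)]
      exact ((p.support_rotate g hg).mem_iff).symm
    have hset : {g' | g' ∈ p.support ∧ Birkhoff.Adj Γ g g'}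
        = {x | x ∈ (p.rotate g hg).support ∧ (indG Γ Gt).Adj g x} := by
      ext x
      simp only [Set.mem_setOf_eq, ← hmemiff x]
      exact ⟨fun ⟨h1, h2⟩ => ⟨h1, hGt g hg, hGt x h1, h2⟩, fun ⟨h1, h2⟩ => ⟨h1, h2.2.2⟩⟩
    rw [hset]
    exact neighbors_le_two_of_min hmodd hmin (p.rotate g hg) hlen' hm3
  · -- PrimitiveOn
    intro k
    refine le_trans (Set.ncard_le_ncard ?_ (hfin.inter_of_left _)) (hk2 k)
    intro x hx
    exact ⟨hGt x hx.1, hx.2⟩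
  · -- OddCycleList
    show Odd (p.support.length - 1)
    rw [Walk.length_support]
    simpa [hp] using hmodd
  · exact hGt
end WalkAux

/-- Lemma 2.7. -/
theorem stmt7 {Ω : Type*} [Countable Ω] (Γ : ℕ → Set Ω)
    (ha : CondA Γ) (h12 : Cond12 Γ)
    (W : Submodule ℝ (Ω → ℝ)) (hW : CondW (W : Set (Ω → ℝ)))
    (hP0 : P0Gamma Γ ⊆ (W : Set (Ω → ℝ)))
    (w : Ω → ℝ) (hw : w ∈ Set.extremePoints ℝ (SGamma Γ ∩ (W : Set (Ω → ℝ)))) :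
    ¬ ∃ Gt : Set Ω, Gt.Finite ∧ Gt.Nonempty ∧ Gt ⊆ Function.support w ∧
      (∀ k, Gt ∩ Γ k = ∅ ∨ (Gt ∩ Γ k).ncard = 2) ∧
      ¬ ∃ l : List Ω, IsPrimitiveCycle Γ l ∧ OddCycleList l ∧ ∀ x ∈ l, x ∈ Gt := by
  classical
  rintro ⟨Gt, hfin, hne, hsuppw, h2, hnoc⟩
  obtain ⟨⟨⟨hpos, hsum⟩, hwW⟩, hwext⟩ := hw
  have hk2 : ∀ k, (Gt ∩ Γ k).ncard ≤ 2 := by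
    intro k; rcases h2 k with h | h
    · rw [h]; simp
    · rw [h]
  obtain ⟨c, hc⟩ : ∃ c : Ω → Bool, ∀ u v, (indG Γ Gt).Adj u v → c u ≠ c v := by
    by_cases hoc : ∃ v, ∃ p : (indG Γ Gt).Walk v v, Odd p.length
    · obtain ⟨v, p, hp⟩ := hoc
      exact absurd (odd_closed_walk_gives_cycle hfin hk2 p hp) hnoc
    · push_neg at hoc
      exact exists_bool_coloring _ (fun v p => Nat.not_odd_iff_even.mp (hoc v p))
  set σ : Ω → ℝ := fun g => if g ∈ Gt then (if c g then 1 else -1) else 0 with hσ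
  have hσne : ∀ g ∈ Gt, σ g ≠ 0 := by
    intro g hg
    rw [hσ]
    simp only [hg, if_pos]
    cases c g <;> norm_num
  have hσabs : ∀ g ∈ Gt, |σ g| = 1 := by
    intro g hg
    rw [hσ]
    simp only [hg, if_pos]
    cases c g <;> norm_num
  have hσzero : ∀ g, g ∉ Gt → σ g = 0 := by
    intro g hg; rw [hσ]; simp only [hg, if_neg]; simp [hg]
  set F : Finset Ω := hfin.toFinset with hF
  have hmemF : ∀ {g : Ω}, g ∈ F ↔ g ∈ Gt := fun {g} => hfin.mem_toFinset
  have hFne : F.Nonempty := by obtain ⟨g, hg⟩ := hne; exact ⟨g, hmemF.mpr hg⟩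
  set ε : ℝ := F.inf' hFne w with hε
  have hεpos : 0 < ε := by
    rw [hε, Finset.lt_inf'_iff]
    intro g hg
    exact lt_of_le_of_ne (hpos g) (Ne.symm (hsuppw (hmemF.mp hg)))
  have hεle : ∀ g ∈ Gt, ε ≤ w g := fun g hg => Finset.inf'_le _ (hmemF.mpr hg)
  have hδ : ∀ g : Ω, (fun x => if x = g then (1:ℝ) else 0) ∈ (W : Set (Ω → ℝ)) := by
    intro g
    apply hP0
    refine ⟨fun x => ?_, fun k => ?_⟩
    · by_cases h : x = g
      · right; simp [h]
      · left; simp [h]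
    · by_cases hg : g ∈ Γ k
      · refine ⟨1, le_refl 1, ?_⟩
        have heq : (fun x : Γ k => if (x : Ω) = g then (1:ℝ) else 0)
            = fun x => if x = (⟨g, hg⟩ : Γ k) then 1 else 0 := by
          funext x; simp [Subtype.ext_iff]
        rw [heq]
        exact hasSum_ite_eq _ _
      · refine ⟨0, zero_le_one, ?_⟩
        have heq : (fun x : Γ k => if (x : Ω) = g then (1:ℝ) else 0) = fun _ => 0 := by
          funext x
          simp only [ite_eq_right_iff]
          intro hxg
          exact absurd (hxg ▸ x.2) hg
        rw [heq]
        exact hasSum_zero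
  have hσW : σ ∈ (W : Set (Ω → ℝ)) := by
    have hrepr : σ = ∑ g ∈ F, σ g • (fun x => if x = g then (1:ℝ) else 0) := by
      funext x
      rw [Finset.sum_apply]
      simp only [Pi.smul_apply, smul_eq_mul, mul_ite, mul_one, mul_zero]
      rw [Finset.sum_ite_eq F x σ]
      by_cases hx : x ∈ F
      · simp [hx]
      · simp only [hx, if_neg]
        simp only [if_false]
        exact hσzero x (fun h => hx (hmemF.mpr h))
    rw [hrepr]
    exact Submodule.sum_mem _ (fun g _ => Submodule.smul_mem _ _ (hδ g))
  have hσsum : ∀ k, HasSum (fun g : Γ k => σ g) 0 := by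
    intro k
    set s : Finset (Γ k) := F.subtype (· ∈ Γ k) with hs
    have hzero : ∀ b : Γ k, b ∉ s → σ b = 0 := by
      intro b hb
      have hbF : (b : Ω) ∉ F := by
        intro hbF; exact hb (by rw [hs]; exact Finset.mem_subtype.mpr hbF)
      exact hσzero _ (fun h => hbF (hmemF.mpr h))
    have hsum0 : ∑ b ∈ s, σ (b : Ω) = 0 := by
      rcases h2 k with hk | hk
      · apply Finset.sum_eq_zero
        intro b hb
        have hbF : (b : Ω) ∈ F := Finset.mem_subtype.mp (hs ▸ hb)
        have hmem : (b : Ω) ∈ Gt ∩ Γ k := ⟨hmemF.mp hbF, b.2⟩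
        rw [hk] at hmem
        exact absurd hmem (Set.notMem_empty _)
      · obtain ⟨a, b, hab, habs⟩ := Set.ncard_eq_two.mp hk
        have haG : a ∈ Gt ∧ a ∈ Γ k := by
          have h3 : a ∈ Gt ∩ Γ k := by rw [habs]; exact Set.mem_insert _ _
          exact h3
        have hbG : b ∈ Gt ∧ b ∈ Γ k := by
          have h3 : b ∈ Gt ∩ Γ k := by rw [habs]; exact Set.mem_insert_of_mem _ rfl
          exact h3
        have hseq : s = {(⟨a, haG.2⟩ : Γ k), ⟨b, hbG.2⟩} := by
          ext x
          simp only [Finset.mem_insert, Finset.mem_singleton, hs, Finset.mem_subtype]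
          constructor
          · intro hxF
            have h3 : (x : Ω) ∈ Gt ∩ Γ k := ⟨hmemF.mp hxF, x.2⟩
            rw [habs] at h3
            rcases h3 with h3 | h3
            · left; exact Subtype.ext h3
            · right; exact Subtype.ext h3
          · rintro (rfl | rfl)
            · exact hmemF.mpr haG.1
            · exact hmemF.mpr hbG.1
        rw [hseq, Finset.sum_pair (fun h => hab (congrArg Subtype.val h))]
        have hadj : (indG Γ Gt).Adj a b := ⟨haG.1, hbG.1, hab, k, haG.2, hbG.2⟩
        have hcab := hc a b hadj
        rw [hσ]
        simp only []
        rw [if_pos haG.1, if_pos hbG.1]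
        cases hca : c a <;> cases hcb : c b <;> simp_all <;> norm_num
    have h4 := hasSum_sum_of_ne_finset_zero (L := SummationFilter.unconditional _) hzero
    rwa [hsum0] at h4
  have hmemS : ∀ t : ℝ, |t| ≤ ε → w + t • σ ∈ SGamma Γ ∩ (W : Set (Ω → ℝ)) := by
    intro t ht
    refine ⟨⟨fun g => ?_, fun k => ?_⟩, Submodule.add_mem _ hwW (Submodule.smul_mem _ _ hσW)⟩
    · simp only [Pi.add_apply, Pi.smul_apply, smul_eq_mul]
      by_cases hg : g ∈ Gt
      · have h1 : |t * σ g| ≤ ε := by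
          rw [abs_mul, hσabs g hg, mul_one]; exact ht
        have h2' := abs_le.mp h1
        have h3 := hεle g hg
        linarith [h2'.1]
      · rw [hσzero g hg, mul_zero, add_zero]; exact hpos g
    · have h1 : HasSum (fun g : Γ k => w g + t * σ g) (1 + t * 0) :=
        (hsum k).add ((hσsum k).mul_left t)
      simpa using h1
  have hne0 : w + ε • σ ≠ w := by
    obtain ⟨g, hg⟩ := hne
    intro heq
    have h1 := congrFun heq g
    simp only [Pi.add_apply, Pi.smul_apply, smul_eq_mul] at h1
    have h2' : ε * σ g = 0 := by linarith
    rcases mul_eq_zero.mp h2' with h | h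
    · exact hεpos.ne' h
    · exact hσne g hg h
  have hseg : w ∈ openSegment ℝ (w + ε • σ) (w + (-ε) • σ) := by
    refine ⟨1/2, 1/2, by norm_num, by norm_num, by norm_num, ?_⟩
    funext g
    simp only [Pi.add_apply, Pi.smul_apply, smul_eq_mul]
    ring
  have hfinal := hwext (hmemS ε (by rw [abs_of_pos hεpos]))
    (hmemS (-ε) (by rw [abs_neg, abs_of_pos hεpos])) hseg
  exact hne0 hfinal


end Birkhoff
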